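/- Let θ > 0, z > 0, and c ∈ ℝ. For every x ∈ (0,1)^N, writing U = 1/(Σ_{i=1}^N x_i), f_i(x) = β b_i(x)(1 − x_i) − δ x_i, and g_i(x) = σ_i(x_i) b_i(x)(1 − x_i), one has: −θ z U^{θ+1} Σ_{i=1}^N f_i(x) + (θ(θ+1)/2) z U^{θ+2} Σ_{i=1}^N g_i(x)² + c·U^{θ} ≤ U^{θ−1}·( −( z θ (β d_min − δ − (M²/32) λ1² (1+θ)) − c )·U + z θ β λ1 ). -/

import Mathlib

/-!
Write `S = ∑ xᵢ = U⁻¹` and `b = A x`. The drift is `∑ fᵢ = β ∑ bᵢ - β ⟪x, A x⟫ - δ S`, where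
`∑ bᵢ ≥ d_min S` (column sums of a symmetric matrix are row sums) and
`⟪x, A x⟫ ≤ λ₁ ‖x‖² ≤ λ₁ S²` (expand `x` in an orthonormal eigenbasis of `A`).
For the noise, `xᵢ (1 - xᵢ) ≤ 1/4` gives `∑ gᵢ² ≤ M²/16 ‖A x‖² ≤ M²/16 λ₁² S²`; the last step
needs every eigenvalue of `A` in `[-λ₁, λ₁]`, and the lower bound holds because `A` is entrywise
nonnegative: `|⟪v, A v⟫| ≤ ⟪|v|, A |v|⟫`.
Substituting both bounds and factoring out `U^θ` leaves an identity.
-/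

open Matrix Module.End
open scoped RealInnerProductSpace

namespace LinearMap.IsSymmetric

variable {E : Type*} [NormedAddCommGroup E] [InnerProductSpace ℝ E] [FiniteDimensional ℝ E]
  {T : E →ₗ[ℝ] E}

theorem inner_eigenvectorBasis_apply (hT : T.IsSymmetric) (i : Fin (Module.finrank ℝ E))
    (x : E) :
    ⟪hT.eigenvectorBasis rfl i, T x⟫ = hT.eigenvalues rfl i * ⟪hT.eigenvectorBasis rfl i, x⟫ := by
  rw [← hT, hT.apply_eigenvectorBasis, real_inner_smul_left]
  rfl

theorem real_inner_apply_self_le (hT : T.IsSymmetric) {c : ℝ}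
    (hc : ∀ μ, HasEigenvalue T μ → μ ≤ c) (x : E) : ⟪T x, x⟫ ≤ c * ‖x‖ ^ 2 := by
  set b := hT.eigenvectorBasis rfl
  rw [← b.sum_sq_inner_right, Finset.mul_sum, ← b.sum_inner_mul_inner]
  refine Finset.sum_le_sum fun i _ => ?_
  rw [real_inner_comm, inner_eigenvectorBasis_apply, mul_assoc, ← sq]
  gcongr
  exact hc _ (hT.hasEigenvalue_eigenvalues rfl i)

theorem norm_apply_sq_le (hT : T.IsSymmetric) {c : ℝ}
    (hc : ∀ μ, HasEigenvalue T μ → |μ| ≤ c) (x : E) : ‖T x‖ ^ 2 ≤ c ^ 2 * ‖x‖ ^ 2 := by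
  set b := hT.eigenvectorBasis rfl
  rw [← b.sum_sq_inner_right, ← b.sum_sq_inner_right, Finset.mul_sum]
  refine Finset.sum_le_sum fun i _ => ?_
  rw [inner_eigenvectorBasis_apply, mul_pow]
  refine mul_le_mul_of_nonneg_right (sq_le_sq.mpr ?_) (sq_nonneg _)
  exact (hc _ (hT.hasEigenvalue_eigenvalues rfl i)).trans (le_abs_self c)

end LinearMap.IsSymmetric

namespace Matrix

variable {n : Type*} [Fintype n] {A : Matrix n n ℝ} {lam : ℝ}

theorem abs_dotProduct_mulVec_le (hA : ∀ i j, 0 ≤ A i j) (x y : n → ℝ) :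
    |x ⬝ᵥ A *ᵥ y| ≤ |x| ⬝ᵥ A *ᵥ |y| := by
  refine (Finset.abs_sum_le_sum_abs _ _).trans (Finset.sum_le_sum fun i _ => ?_)
  rw [abs_mul, Pi.abs_apply]
  gcongr
  refine (Finset.abs_sum_le_sum_abs _ _).trans (Finset.sum_le_sum fun j _ => ?_)
  rw [abs_mul, abs_of_nonneg (hA i j), Pi.abs_apply]

theorem mul_sum_le_sum_mulVec {d : ℝ} (hd : ∀ j, d ≤ ∑ i, A i j) {x : n → ℝ} (hx : 0 ≤ x) :
    d * ∑ j, x j ≤ ∑ i, (A *ᵥ x) i := by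
  rw [← one_dotProduct (A *ᵥ x), dotProduct_mulVec, Finset.mul_sum]
  refine Finset.sum_le_sum fun j _ => mul_le_mul_of_nonneg_right ?_ (hx j)
  simpa [vecMul, dotProduct] using hd j

theorem dotProduct_self_le_sq_sum {x : n → ℝ} (hx : 0 ≤ x) : x ⬝ᵥ x ≤ (∑ i, x i) ^ 2 := by
  simpa only [dotProduct, sq] using Finset.sum_sq_le_sq_sum_of_nonneg fun i _ => hx i

variable [DecidableEq n]

theorem exists_mulVec_eq_smul_of_hasEigenvalue {μ : ℝ}
    (h : HasEigenvalue A.toEuclideanLin μ) : ∃ v, v ≠ 0 ∧ A *ᵥ v = μ • v := by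
  obtain ⟨w, hw⟩ := h.exists_hasEigenvector
  exact ⟨WithLp.ofLp w, by simpa using hw.2, congrArg WithLp.ofLp hw.apply_eq_smul⟩

theorem dotProduct_mulVec_self_le (hA : A.IsSymm)
    (hlam : ∀ μ v, v ≠ 0 → A *ᵥ v = μ • v → μ ≤ lam) (x : n → ℝ) :
    x ⬝ᵥ A *ᵥ x ≤ lam * (x ⬝ᵥ x) := by
  have hT := isSymmetric_toEuclideanLin_iff.mpr (hA : A.IsHermitian)
  have := hT.real_inner_apply_self_le (c := lam) (fun μ hμ => ?_) (WithLp.toLp 2 x)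
  · rw [← real_inner_self_eq_norm_sq, toLpLin_toLp, EuclideanSpace.inner_toLp_toLp,
      EuclideanSpace.inner_toLp_toLp] at this
    simpa only [star_trivial, toLin'_apply] using this
  obtain ⟨v, hv, hAv⟩ := exists_mulVec_eq_smul_of_hasEigenvalue hμ
  exact hlam μ v hv hAv

theorem abs_le_of_mulVec_eq_smul (hA : A.IsSymm) (hA₀ : ∀ i j, 0 ≤ A i j)
    (hlam : ∀ μ v, v ≠ 0 → A *ᵥ v = μ • v → μ ≤ lam) {μ : ℝ} {v : n → ℝ} (hv : v ≠ 0)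
    (hAv : A *ᵥ v = μ • v) : |μ| ≤ lam := by
  have hvv : 0 < v ⬝ᵥ v := (Finset.sum_nonneg fun i _ => mul_self_nonneg (v i)).lt_of_ne'
    (dotProduct_self_eq_zero.not.mpr hv)
  have hquad : v ⬝ᵥ A *ᵥ v = μ * (v ⬝ᵥ v) := by rw [hAv, dotProduct_smul, smul_eq_mul]
  have habs : |v| ⬝ᵥ |v| = v ⬝ᵥ v := by simp [dotProduct, abs_mul_abs_self]
  have := (abs_dotProduct_mulVec_le hA₀ v v).trans (dotProduct_mulVec_self_le hA hlam |v|)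
  rw [hquad, habs, abs_mul, abs_of_pos hvv] at this
  exact le_of_mul_le_mul_right this hvv

theorem mulVec_dotProduct_mulVec_le (hA : A.IsSymm) (hA₀ : ∀ i j, 0 ≤ A i j)
    (hlam : ∀ μ v, v ≠ 0 → A *ᵥ v = μ • v → μ ≤ lam) (x : n → ℝ) :
    A *ᵥ x ⬝ᵥ A *ᵥ x ≤ lam ^ 2 * (x ⬝ᵥ x) := by
  have hT := isSymmetric_toEuclideanLin_iff.mpr (hA : A.IsHermitian)
  have := hT.norm_apply_sq_le (c := lam) (fun μ hμ => ?_) (WithLp.toLp 2 x)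
  · rw [← real_inner_self_eq_norm_sq, ← real_inner_self_eq_norm_sq, toLpLin_toLp,
      EuclideanSpace.inner_toLp_toLp, EuclideanSpace.inner_toLp_toLp] at this
    simpa only [star_trivial, toLin'_apply] using this
  obtain ⟨v, hv, hAv⟩ := exists_mulVec_eq_smul_of_hasEigenvalue hμ
  exact abs_le_of_mulVec_eq_smul hA hA₀ hlam hv hAv

end Matrix

theorem sq_mul_mul_one_sub_le {s b t M : ℝ} (hM : 0 ≤ M) (ht : t ∈ Set.Icc 0 1)
    (hs : |s| ≤ M * t) : (s * b * (1 - t)) ^ 2 ≤ M ^ 2 / 16 * b ^ 2 := by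
  have h : |s * (1 - t)| ≤ M / 4 := calc
    |s * (1 - t)| = |s| * (1 - t) := by rw [abs_mul, abs_of_nonneg (sub_nonneg.2 ht.2)]
    _ ≤ M * t * (1 - t) := by gcongr; exact sub_nonneg.2 ht.2
    _ ≤ M / 4 := by nlinarith [mul_nonneg hM (sq_nonneg (t - 1 / 2))]
  calc (s * b * (1 - t)) ^ 2 = |s * (1 - t)| ^ 2 * b ^ 2 := by rw [sq_abs]; ring
    _ ≤ (M / 4) ^ 2 * b ^ 2 := by gcongr
    _ = M ^ 2 / 16 * b ^ 2 := by ring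

namespace NetworkSIS

variable {n : Type*} [Fintype n] [DecidableEq n] {A : Matrix n n ℝ} {lam : ℝ} {x : n → ℝ}

theorem sum_drift_ge (hA : A.IsSymm) (hlam : ∀ μ v, v ≠ 0 → A *ᵥ v = μ • v → μ ≤ lam)
    (hlam₀ : 0 ≤ lam) {d β δ : ℝ} (hd : ∀ i, d ≤ ∑ j, A i j) (hβ : 0 ≤ β) (hx : 0 ≤ x) :
    β * d * (∑ i, x i) - β * lam * (∑ i, x i) ^ 2 - δ * ∑ i, x i
      ≤ ∑ i, (β * (A *ᵥ x) i * (1 - x i) - δ * x i) := by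
  have hsum : ∑ i, (β * (A *ᵥ x) i * (1 - x i) - δ * x i)
      = β * ∑ i, (A *ᵥ x) i - β * (x ⬝ᵥ A *ᵥ x) - δ * ∑ i, x i := by
    simp only [dotProduct, Finset.mul_sum, ← Finset.sum_sub_distrib]
    exact Finset.sum_congr rfl fun i _ => by ring
  have hcol : ∀ j, d ≤ ∑ i, A i j := fun j => (hd j).trans_eq
    (Finset.sum_congr rfl fun i _ => hA.apply i j)
  have hquad : x ⬝ᵥ A *ᵥ x ≤ lam * (∑ i, x i) ^ 2 :=
    (dotProduct_mulVec_self_le hA hlam x).trans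
      (mul_le_mul_of_nonneg_left (dotProduct_self_le_sq_sum hx) hlam₀)
  rw [hsum]
  nlinarith [mul_sum_le_sum_mulVec hcol hx]

theorem sum_diffusion_sq_le (hA : A.IsSymm) (hA₀ : ∀ i j, 0 ≤ A i j)
    (hlam : ∀ μ v, v ≠ 0 → A *ᵥ v = μ • v → μ ≤ lam) {M : ℝ} (hM : 0 ≤ M) {s : n → ℝ}
    (hx : ∀ i, x i ∈ Set.Icc 0 1) (hs : ∀ i, |s i| ≤ M * x i) :
    ∑ i, (s i * (A *ᵥ x) i * (1 - x i)) ^ 2 ≤ M ^ 2 / 16 * lam ^ 2 * (∑ i, x i) ^ 2 := calc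
  _ ≤ M ^ 2 / 16 * (A *ᵥ x ⬝ᵥ A *ᵥ x) := by
    simp only [dotProduct, Finset.mul_sum, ← sq]
    exact Finset.sum_le_sum fun i _ => sq_mul_mul_one_sub_le hM (hx i) (hs i)
  _ ≤ M ^ 2 / 16 * (lam ^ 2 * (∑ i, x i) ^ 2) := by
    gcongr
    exact (mulVec_dotProduct_mulVec_le hA hA₀ hlam x).trans
      (mul_le_mul_of_nonneg_left (dotProduct_self_le_sq_sum fun i => (hx i).1) (sq_nonneg _))
  _ = M ^ 2 / 16 * lam ^ 2 * (∑ i, x i) ^ 2 := by ring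

theorem generator_le_of_drift_bounds {S θ z c β δ d lam M F G : ℝ} (hS : 0 < S) (hθ : 0 < θ)
    (hz : 0 < z) (hF : β * d * S - β * lam * S ^ 2 - δ * S ≤ F)
    (hG : G ≤ M ^ 2 / 16 * lam ^ 2 * S ^ 2) :
    -θ * z * (1 / S) ^ (θ + 1) * F + (θ * (θ + 1) / 2) * z * (1 / S) ^ (θ + 2) * G
        + c * (1 / S) ^ θ
      ≤ (1 / S) ^ (θ - 1) *
          (-(z * θ * (β * d - δ - M ^ 2 / 32 * lam ^ 2 * (1 + θ)) - c) * (1 / S)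
            + z * θ * β * lam) := by
  have hU : 0 < 1 / S := by positivity
  have h2 : (1 / S) ^ (θ + 2) = (1 / S) ^ θ * (1 / S) ^ 2 := by
    exact_mod_cast Real.rpow_add_natCast hU.ne' θ 2
  rw [Real.rpow_add_one hU.ne', Real.rpow_sub_one hU.ne', h2]
  calc _ ≤ -θ * z * ((1 / S) ^ θ * (1 / S)) * (β * d * S - β * lam * S ^ 2 - δ * S)
        + (θ * (θ + 1) / 2) * z * ((1 / S) ^ θ * (1 / S) ^ 2) * (M ^ 2 / 16 * lam ^ 2 * S ^ 2)
        + c * (1 / S) ^ θ := by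
        gcongr ?_ + ?_ + _
        · simp only [neg_mul, neg_le_neg_iff]
          gcongr
        · gcongr
    _ = _ := by field_simp; ring

end NetworkSIS

theorem generator_Utheta_estimate_general
    (N : ℕ) (hN : 1 ≤ N)
    (A : Matrix (Fin N) (Fin N) ℝ)
    (hA_symm : A.IsSymm)
    (hA_01 : ∀ i j, A i j = 0 ∨ A i j = 1)
    (lam1 : ℝ)
    (hlam1_eig : ∃ v : Fin N → ℝ, v ≠ 0 ∧ A.mulVec v = lam1 • v)
    (hlam1_max : ∀ (μ : ℝ) (v : Fin N → ℝ), v ≠ 0 → A.mulVec v = μ • v → μ ≤ lam1)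
    (dmin : ℝ)
    (hdmin_le : ∀ i, dmin ≤ ∑ j, A i j)
    (β δ : ℝ) (hβ : 0 ≤ β)
    (M : ℝ) (hM : 0 ≤ M)
    (σ : Fin N → ℝ → ℝ)
    (hσ : ∀ i, ∀ v ∈ Set.Ioo (0 : ℝ) 1, |σ i v| ≤ M * v)
    (θ z c : ℝ) (hθ : 0 < θ) (hz : 0 < z)
    (x : Fin N → ℝ) (hx : ∀ i, x i ∈ Set.Ioo (0 : ℝ) 1)
    (U : ℝ) (hU : U = 1 / ∑ i, x i)
    (f g : Fin N → ℝ)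
    (hf : ∀ i, f i = β * (∑ j, A i j * x j) * (1 - x i) - δ * x i)
    (hg : ∀ i, g i = σ i (x i) * (∑ j, A i j * x j) * (1 - x i)) :
    -θ * z * U ^ (θ + 1) * (∑ i, f i)
        + (θ * (θ + 1) / 2) * z * U ^ (θ + 2) * (∑ i, (g i) ^ 2)
        + c * U ^ θ
      ≤ U ^ (θ - 1) *
          (-(z * θ * (β * dmin - δ - M ^ 2 / 32 * lam1 ^ 2 * (1 + θ)) - c) * U
            + z * θ * β * lam1) := by
  have hA₀ : ∀ i j, 0 ≤ A i j := fun i j => by rcases hA_01 i j with h | h <;> simp [h]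
  have hlam₀ : 0 ≤ lam1 := by
    obtain ⟨v, hv, hAv⟩ := hlam1_eig
    exact (abs_nonneg _).trans (abs_le_of_mulVec_eq_smul hA_symm hA₀ hlam1_max hv hAv)
  have hxI : ∀ i, x i ∈ Set.Icc 0 1 := fun i => Set.Ioo_subset_Icc_self (hx i)
  have hS : 0 < ∑ i, x i := Finset.sum_pos (fun i _ => (hx i).1) ⟨⟨0, hN⟩, Finset.mem_univ _⟩
  have hF := NetworkSIS.sum_drift_ge (δ := δ) hA_symm hlam1_max hlam₀ hdmin_le hβ fun i => (hxI i).1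
  have hG := NetworkSIS.sum_diffusion_sq_le hA_symm hA₀ hlam1_max hM hxI fun i => hσ i (x i) (hx i)
  simp only [hf, hg, hU]
  exact NetworkSIS.generator_le_of_drift_bounds hS hθ hz hF hG

/-- Key generator inequality (lbarV2) in the proof of Lemma 3.3 (moment bound ensuring
stochastic permanence): the value of the extended generator on `V̄(x) = z U(x)^θ` in a fixed
environmental state (with `c` standing for the Markov-switching term) is bounded by
`U^{θ-1} ( -( zθ(β d_min - δ - (M²/32)λ₁²(1+θ)) - c ) U + zθβλ₁ )`. -/
theorem generator_Utheta_estimate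
    (N : ℕ) (hN : 1 ≤ N)
    (A : Matrix (Fin N) (Fin N) ℝ)
    (hA_symm : A.IsSymm)
    (hA_01 : ∀ i j, A i j = 0 ∨ A i j = 1)
    (hA_diag : ∀ i, A i i = 0)
    (lam1 : ℝ)
    (hlam1_eig : ∃ v : Fin N → ℝ, v ≠ 0 ∧ A.mulVec v = lam1 • v)
    (hlam1_max : ∀ (μ : ℝ) (v : Fin N → ℝ), v ≠ 0 → A.mulVec v = μ • v → μ ≤ lam1)
    (dmin : ℝ)
    (hdmin_le : ∀ i, dmin ≤ ∑ j, A i j)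
    (hdmin_mem : ∃ i, dmin = ∑ j, A i j)
    (β δ : ℝ) (hβ : 0 ≤ β) (hδ : 0 ≤ δ)
    (M : ℝ) (hM : 0 ≤ M)
    (σ : Fin N → ℝ → ℝ)
    (hσ : ∀ i, ∀ v ∈ Set.Ioo (0 : ℝ) 1, |σ i v| ≤ M * v)
    (θ z c : ℝ) (hθ : 0 < θ) (hz : 0 < z)
    (x : Fin N → ℝ) (hx : ∀ i, x i ∈ Set.Ioo (0 : ℝ) 1)
    (U : ℝ) (hU : U = 1 / ∑ i, x i)
    (f g : Fin N → ℝ)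
    (hf : ∀ i, f i = β * (∑ j, A i j * x j) * (1 - x i) - δ * x i)
    (hg : ∀ i, g i = σ i (x i) * (∑ j, A i j * x j) * (1 - x i)) :
    -θ * z * U ^ (θ + 1) * (∑ i, f i)
        + (θ * (θ + 1) / 2) * z * U ^ (θ + 2) * (∑ i, (g i) ^ 2)
        + c * U ^ θ
      ≤ U ^ (θ - 1) *
          (-(z * θ * (β * dmin - δ - M ^ 2 / 32 * lam1 ^ 2 * (1 + θ)) - c) * U
            + z * θ * β * lam1) :=
  generator_Utheta_estimate_general N hN A hA_symm hA_01 lam1 hlam1_eig hlam1_max dmin hdmin_le β δ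
    hβ M hM σ hσ θ z c hθ hz x hx U hU f g hf hg
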